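/- arXiv:1409.4356 — 4 statements merged into one kernel-verified Lean document; each statement's English description precedes it below -/
import Mathlib

section
/- For any two fixed-point-free involutions f and g of the symmetric group S_{2n}, the disjoint cycles of the product f∘g have lengths occurring in pairs; that is, the cycle type of f∘g is of the form λλ (each part repeated an even number of times) for some partition λ of n. -/
/-! Put `σ = f * g`. As `f` and `g` are involutions, `f σ f⁻¹ = g f = σ⁻¹`. Hence `f` maps
fixed points of `σ` to fixed points, and `c ↦ f c⁻¹ f⁻¹` permutes the cycles of `σ` preserving
their lengths; both maps are involutions without fixed points, so every part of the cycle type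
occurs an even number of times. A cycle `c` with `f c f⁻¹ = c⁻¹` is impossible: `f` would act on
it as a reflection of a polygon, fixing a vertex `y` or an edge `{y, σ y}`, and then `f` or
`g = f σ` would fix `y`. -/

/-- The cycle type of a permutation including its fixed points: the parts of
`Equiv.Perm.cycleType` (cycles of length `≥ 2`) together with one part `1` for
each fixed point. -/
def cycleTypeFull {α : Type*} [Fintype α] [DecidableEq α] (σ : Equiv.Perm α) : Multiset ℕ :=
  σ.cycleType + Multiset.replicate (Fintype.card α - σ.support.card) 1

open Finset

theorem Finset.even_card_of_involution {ι : Type*} {s : Finset ι} (g : ι → ι)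
    (hg_ne : ∀ a ∈ s, g a ≠ a) (hg_mem : ∀ a ∈ s, g a ∈ s) (hg_inv : ∀ a ∈ s, g (g a) = a) :
    Even #s := by
  have h : ∑ _ ∈ s, (1 : ZMod 2) = 0 :=
    sum_involution (fun a _ ↦ g a) (fun _ _ ↦ by decide) (fun a ha _ ↦ hg_ne a ha) hg_mem hg_inv
  rwa [sum_const, nsmul_one, ZMod.natCast_eq_zero_iff_even] at h

theorem Multiset.exists_add_self_eq_of_even_count {α : Type*} [DecidableEq α] (m : Multiset α)
    (h : ∀ a, Even (m.count a)) : ∃ m' : Multiset α, m' + m' = m := by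
  refine ⟨Finsupp.toMultiset (Finsupp.mapRange (· / 2) (Nat.zero_div 2) (Multiset.toFinsupp m)), ?_⟩
  ext a
  obtain ⟨k, hk⟩ := h a
  simp only [Multiset.count_add, Finsupp.count_toMultiset, Finsupp.mapRange_apply,
    Multiset.toFinsupp_apply, hk]
  omega

theorem Nat.Partition.exists_parts_eq_add_self {m n : ℕ} (p : m.Partition) (hmn : m = 2 * n)
    (h : ∀ k, Even (p.parts.count k)) : ∃ lam : n.Partition, p.parts = lam.parts + lam.parts := by
  obtain ⟨half, hhalf⟩ := p.parts.exists_add_self_eq_of_even_count h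
  have hsum : half.sum + half.sum = 2 * n := by rw [← Multiset.sum_add, hhalf, p.parts_sum, hmn]
  exact ⟨⟨half, fun ha ↦ p.parts_pos (hhalf ▸ Multiset.mem_add.2 (Or.inl ha)), by omega⟩,
    hhalf.symm⟩

namespace Equiv.Perm

variable {α : Type*} [DecidableEq α] [Fintype α]

theorem inv_mem_cycleFactorsFinset_inv {σ c : Perm α} (hc : c ∈ σ.cycleFactorsFinset) :
    c⁻¹ ∈ σ⁻¹.cycleFactorsFinset := by
  rw [mem_cycleFactorsFinset_iff] at hc ⊢
  refine ⟨hc.1.inv, fun a ha ↦ ?_⟩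
  rw [support_inv] at ha
  have hmem : c⁻¹ a ∈ c.support := by
    rw [← support_inv]
    exact apply_mem_support.2 (by rwa [support_inv])
  rw [eq_comm, inv_eq_iff_eq, ← hc.2 _ hmem]
  exact (c.apply_symm_apply a).symm

theorem IsCycle.exists_apply_eq_self_or_apply_apply_eq_self_of_conj_eq_inv {c f : Perm α}
    (hc : c.IsCycle) (hfc : f * c * f⁻¹ = c⁻¹) :
    ∃ y ∈ c.support, f y = y ∨ f (c y) = y := by
  have hf_zpow (t : ℤ) (x : α) : f ((c ^ t) x) = (c ^ (-t)) (f x) := by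
    have := congrArg (· ^ t) hfc
    simp only [conj_zpow, inv_zpow'] at this
    simpa using congrArg (· (f x)) this
  obtain ⟨x, hx, -⟩ := id hc
  have hfx : c (f x) ≠ f x := by
    have h := hf_zpow (-1) x
    rw [neg_neg, zpow_one, zpow_neg_one] at h
    rw [← h, ne_eq, EmbeddingLike.apply_eq_iff_eq, inv_eq_iff_eq]
    exact fun h ↦ hx h.symm
  obtain ⟨j, hj⟩ := hc.sameCycle hx hfx
  obtain ⟨m, rfl | rfl⟩ := Int.even_or_odd' j
  · refine ⟨(c ^ m) x, zpow_apply_mem_support.2 (mem_support.2 hx), Or.inl ?_⟩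
    rw [hf_zpow, ← hj, ← mul_apply, ← zpow_add]
    congr 2
    ring
  · refine ⟨(c ^ m) x, zpow_apply_mem_support.2 (mem_support.2 hx), Or.inr ?_⟩
    rw [← mul_apply c, ← zpow_one_add, hf_zpow, ← hj, ← mul_apply, ← zpow_add]
    congr 2
    ring

section ConjEqInv

variable {σ f : Perm α} (hf : f * f = 1) (hσ : f * σ * f⁻¹ = σ⁻¹)
include hf hσ

theorem even_card_sub_card_support_of_conj_eq_inv (hf_ne : ∀ x, f x ≠ x) :
    Even (Fintype.card α - #σ.support) := by
  rw [← card_compl]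
  refine even_card_of_involution f (fun x _ ↦ hf_ne x) (fun x hx ↦ ?_) (fun x _ ↦ ?_)
  · have h : f (σ x) = σ⁻¹ (f x) := by simpa using congrArg (· (f x)) hσ
    rw [mem_compl, notMem_support] at hx ⊢
    rw [hx, eq_comm, inv_eq_iff_eq] at h
    exact h.symm
  · simpa using congrArg (· x) hf

theorem even_count_cycleType_of_conj_eq_inv
    (hfix : ∀ c ∈ σ.cycleFactorsFinset, f * c * f⁻¹ ≠ c⁻¹) (k : ℕ) :
    Even (σ.cycleType.count k) := by
  rw [cycleType_def, Multiset.count_map]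
  refine even_card_of_involution (s := {c ∈ σ.cycleFactorsFinset | k = #c.support})
    (fun c ↦ f * c⁻¹ * f⁻¹) (fun c hc ↦ ?_) (fun c hc ↦ ?_) (fun c _ ↦ ?_)
  · rw [Finset.mem_filter] at hc
    exact fun h ↦ hfix c hc.1 (by simpa [mul_assoc] using congrArg (·⁻¹) h)
  · rw [Finset.mem_filter] at hc ⊢
    refine ⟨?_, by rw [card_support_conj, support_inv, hc.2]⟩
    have h := (mem_cycleFactorsFinset_conj σ⁻¹ f c⁻¹).2 (inv_mem_cycleFactorsFinset_inv hc.1)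
    have hσ' : f * σ⁻¹ * f⁻¹ = σ := by simpa [mul_assoc] using congrArg (·⁻¹) hσ
    rwa [hσ'] at h
  · have hf_inv : f⁻¹ = f := inv_eq_of_mul_eq_one_right hf
    simp only [mul_inv_rev, inv_inv, hf_inv, ← mul_assoc, hf, one_mul]
    rw [mul_assoc, hf, mul_one]

theorem even_count_partition_of_conj_eq_inv (hf_ne : ∀ x, f x ≠ x)
    (hfix : ∀ c ∈ σ.cycleFactorsFinset, f * c * f⁻¹ ≠ c⁻¹) (k : ℕ) :
    Even (σ.partition.parts.count k) := by
  rw [parts_partition, Multiset.count_add, Multiset.count_replicate]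
  have hcycle := even_count_cycleType_of_conj_eq_inv hf hσ hfix k
  split_ifs
  · exact hcycle.add (even_card_sub_card_support_of_conj_eq_inv hf hσ hf_ne)
  · simpa using hcycle

end ConjEqInv

theorem conj_ne_inv_of_mem_cycleFactorsFinset_mul {f g c : Perm α} (hf : f * f = 1)
    (hf_ne : ∀ x, f x ≠ x) (hg_ne : ∀ x, g x ≠ x) (hc : c ∈ (f * g).cycleFactorsFinset) :
    f * c * f⁻¹ ≠ c⁻¹ := by
  intro hfc
  rw [mem_cycleFactorsFinset_iff] at hc
  obtain ⟨y, hy, hfy | hfcy⟩ := hc.1.exists_apply_eq_self_or_apply_apply_eq_self_of_conj_eq_inv hfc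
  · exact hf_ne y hfy
  · rw [hc.2 y hy, mul_apply, ← mul_apply f f, hf, one_apply] at hfcy
    exact hg_ne y hfcy

end Equiv.Perm

/-- For any two fixed-point-free involutions `f` and `g` of `S_{2n}`, the cycle type of
`f * g` is of the form `λλ` for some partition `λ` of `n`. -/
theorem stmt0 (n : ℕ) (f g : Equiv.Perm (Fin (2 * n)))
    (hf2 : f * f = 1) (hg2 : g * g = 1)
    (hf : ∀ x, f x ≠ x) (hg : ∀ x, g x ≠ x) :
    ∃ lam : Nat.Partition n, cycleTypeFull (f * g) = lam.parts + lam.parts := by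
  have hσ : f * (f * g) * f⁻¹ = (f * g)⁻¹ := by
    rw [inv_eq_of_mul_eq_one_right hf2, mul_inv_rev, inv_eq_of_mul_eq_one_right hf2,
      inv_eq_of_mul_eq_one_right hg2, ← mul_assoc, hf2, one_mul]
  exact (f * g).partition.exists_parts_eq_add_self (Fintype.card_fin _)
    (Equiv.Perm.even_count_partition_of_conj_eq_inv hf2 hσ hf
      fun c hc ↦ Equiv.Perm.conj_ne_inv_of_mem_cycleFactorsFinset_mul hf2 hf hg hc)
end

section
/- For any integer a ≥ 1, the action of the operator Σ_{i≠j} (2 x_i² x_j/(x_i − x_j)) ∂/∂x_i on the power sum p_a = Σ_i x_i^a yields a Σ_{k=1}^{a} p_{a+1−k} p_k − a² p_{a+1}. -/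
/-! Since `∂p_a/∂x_i = a x_i^(a-1)`, the left-hand side is
`a Σ_{i≠j} 2 x_i^(a+1) x_j / (x_i - x_j)`. The terms for `(i, j)` and `(j, i)` together give
`2 (x_i^(a+1) x_j - x_j^(a+1) x_i) / (x_i - x_j) = S(x_i, x_j) + S(x_j, x_i)` with
`S(x, y) = Σ_{k=1}^a x^(a+1-k) y^k`, so the off-diagonal sum equals `Σ_{i≠j} S(x_j, x_i)`.
Adding and removing the diagonal, this is `Σ_k (p_{a+1-k} p_k - p_{a+1})`. -/

open MvPolynomial Finset

noncomputable section

variable {F : Type*} [Field F]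

/-- The `a`-th power sum in `n` variables. -/
def psum (n a : ℕ) : MvPolynomial (Fin n) F := ∑ i : Fin n, X i ^ a

theorem Finset.sum_sum_erase_eq_zero_of_antisymm {ι M : Type*} [Fintype ι] [DecidableEq ι]
    [AddCommGroup M] (f : ι → ι → M) (hf : ∀ i j, i ≠ j → f i j + f j i = 0) :
    ∑ i, ∑ j ∈ univ.erase i, f i j = 0 := by
  rw [sum_sigma']
  refine sum_involution (fun p _ => ⟨p.2, p.1⟩) (fun p hp => hf _ _ ?_) (fun p hp _ h => ?_)
    (fun p hp => ?_) (fun _ _ => rfl)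
  all_goals simp only [mem_sigma, mem_univ, mem_erase, true_and, and_true] at hp
  · exact hp.symm
  · exact hp (congrArg Sigma.fst h)
  · simpa using Ne.symm hp

theorem Finset.sum_sum_erase_mul {ι R : Type*} [Fintype ι] [DecidableEq ι] [CommRing R]
    (u v : ι → R) :
    ∑ i, ∑ j ∈ univ.erase i, u j * v i = (∑ i, u i) * ∑ i, v i - ∑ i, u i * v i := by
  simp only [← sum_mul, sum_erase_eq_sub (mem_univ _), sum_sub_distrib, mul_sum]

theorem sum_Icc_pow_mul_pow_mul_sub {R : Type*} [CommRing R] (x y : R) (a : ℕ) :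
    (∑ k ∈ Icc 1 a, x ^ (a + 1 - k) * y ^ k) * (x - y) = x ^ (a + 1) * y - x * y ^ (a + 1) := by
  have h : ∑ k ∈ Icc 1 a, x ^ (a + 1 - k) * y ^ k
      = x * ∑ k ∈ Ico 1 (a + 1), y ^ k * x ^ (a + 1 - 1 - k) := by
    rw [mul_sum, Ico_add_one_right_eq_Icc]
    refine sum_congr rfl fun k hk => ?_
    rw [show a + 1 - k = a + 1 - 1 - k + 1 by grind, pow_succ]
    ring
  rw [h, mul_assoc, ← neg_sub y x, mul_neg, (Commute.all y x).geom_sum₂_Ico_mul (by omega),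
    Nat.add_sub_cancel]
  ring

theorem two_mul_pow_mul_div_sub_add {K : Type*} [Field K] {x y : K} (hxy : x ≠ y) (a : ℕ) :
    2 * x ^ (a + 1) * y / (x - y) + 2 * y ^ (a + 1) * x / (y - x)
      = ∑ k ∈ Icc 1 a, x ^ (a + 1 - k) * y ^ k + ∑ k ∈ Icc 1 a, y ^ (a + 1 - k) * x ^ k := by
  rw [← neg_sub x y, div_neg, ← sub_eq_add_neg, ← sub_div, eq_comm,
    eq_div_iff (sub_ne_zero.2 hxy)]
  linear_combination sum_Icc_pow_mul_pow_mul_sub x y a - sum_Icc_pow_mul_pow_mul_sub y x a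

theorem sum_sum_erase_two_mul_pow_mul_div_sub {ι K : Type*} [Fintype ι] [DecidableEq ι] [Field K]
    {x : ι → K} (hx : Function.Injective x) (a : ℕ) :
    ∑ i, ∑ j ∈ univ.erase i, 2 * x i ^ (a + 1) * x j / (x i - x j)
      = ∑ k ∈ Icc 1 a, (∑ i, x i ^ (a + 1 - k)) * ∑ i, x i ^ k - a * ∑ i, x i ^ (a + 1) := by
  have hantisymm : ∑ i, ∑ j ∈ univ.erase i, (2 * x i ^ (a + 1) * x j / (x i - x j)
      - ∑ k ∈ Icc 1 a, x j ^ (a + 1 - k) * x i ^ k) = 0 :=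
    sum_sum_erase_eq_zero_of_antisymm _ fun i j hij => by
      rw [sub_add_sub_comm, two_mul_pow_mul_div_sub_add (hx.ne hij), add_comm, sub_self]
  have hdiag : ∀ i, ∀ k ∈ Icc 1 a, x i ^ (a + 1 - k) * x i ^ k = x i ^ (a + 1) := by
    intro i k hk
    rw [← pow_add, Nat.sub_add_cancel (by grind)]
  have hoffdiag : ∑ i, ∑ j ∈ univ.erase i, ∑ k ∈ Icc 1 a, x j ^ (a + 1 - k) * x i ^ k
      = ∑ k ∈ Icc 1 a, (∑ i, x i ^ (a + 1 - k)) * ∑ i, x i ^ k - a * ∑ i, x i ^ (a + 1) := by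
    simp_rw [sum_comm (s := univ.erase _), sum_comm (s := univ) (t := Icc 1 a), sum_sum_erase_mul]
    rw [sum_sub_distrib, sum_congr rfl fun k hk => sum_congr rfl fun i _ => hdiag i k hk, sum_const,
      Nat.card_Icc, Nat.add_sub_cancel, nsmul_eq_mul]
  rw [← hoffdiag, ← sub_eq_zero, ← hantisymm]
  simp only [sum_sub_distrib]

theorem pderiv_psum (n a : ℕ) (i : Fin n) :
    pderiv i (psum n a : MvPolynomial (Fin n) F)
      = (a : MvPolynomial (Fin n) F) * X i ^ (a - 1) := by
  simp [_root_.psum, Pi.single_apply]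

/-- For `a ≥ 1`, the operator `Σ_{i≠j} (2 x_i² x_j/(x_i − x_j)) ∂/∂x_i` applied to the power
sum `p_a` yields `a Σ_{k=1}^{a} p_{a+1−k} p_k − a² p_{a+1}`; the left-hand side is computed in
the fraction field of the polynomial ring in `x_1, …, x_n`. -/
theorem stmt7 (n a : ℕ) (ha : 1 ≤ a) :
    (∑ i : Fin n, ∑ j ∈ Finset.univ.erase i,
        algebraMap (MvPolynomial (Fin n) F) (FractionRing (MvPolynomial (Fin n) F))
            (2 * X i ^ 2 * X j * pderiv i (psum n a))
          / algebraMap (MvPolynomial (Fin n) F) (FractionRing (MvPolynomial (Fin n) F))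
            (X i - X j))
      = algebraMap (MvPolynomial (Fin n) F) (FractionRing (MvPolynomial (Fin n) F))
          (C (a : F) * (∑ k ∈ Finset.Icc 1 a, psum n (a + 1 - k) * psum n k)
            - C (a : F) ^ 2 * psum n (a + 1)) := by
  set φ := algebraMap (MvPolynomial (Fin n) F) (FractionRing (MvPolynomial (Fin n) F))
  have hX : Function.Injective fun i => φ (X i) :=
    (IsFractionRing.injective _ _).comp X_injective
  have hterm : ∀ i j : Fin n, 2 * X i ^ 2 * X j * pderiv i (_root_.psum n a)
      = (a : MvPolynomial (Fin n) F) * (2 * X i ^ (a + 1) * X j) := by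
    intro i j
    rw [pderiv_psum, show a + 1 = 2 + (a - 1) by omega]
    ring
  simp only [hterm, map_mul, map_sub, map_natCast, map_pow, map_ofNat,
    mul_div_assoc (a : FractionRing (MvPolynomial (Fin n) F)), ← mul_sum]
  rw [sum_sum_erase_two_mul_pow_mul_div_sub hX]
  simp only [_root_.psum, map_sum, map_mul, map_pow]
  ring

end
end

section
/- Let λ be a partition of n+1 ≥ 2 and let c^λ_{n+1,n+1} be the connection coefficient of the class algebra of S_{n+1} counting factorizations of a fixed permutation of cycle type λ as a product of two (n+1)-cycles. Then for every index i with 1 ≤ i ≤ ℓ(λ): c^λ_{n+1,n+1} = Σ_{d=1}^{λ_i−2} c^{λ↑(λ_i−1−d,d)}_{nn} + Σ_{j≠i} λ_j c^{λ↓(λ_i,λ_j)}_{nn}. -/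
/-- The number of ordered factorizations of `σ ∈ S_m` as a product of two full `m`-cycles. -/
def cFactCount (m : ℕ) (σ : Equiv.Perm (Fin m)) : ℕ :=
  (Finset.univ.filter fun p : Equiv.Perm (Fin m) × Equiv.Perm (Fin m) =>
    cycleTypeFull p.1 = {m} ∧ cycleTypeFull p.2 = {m} ∧ p.1 * p.2 = σ).card

/-!
Fix `σ` of cycle type `λ` in cycle notation, with `x` at the head of a cycle of length `k`, and
sort the factorizations `σ = τ ρ` into two full cycles by `z = τ x`. For `w = σ⁻¹ z`, the
maps `τ ↦ (x z) τ`, `ρ ↦ ρ (w x)` are a bijection onto the factorizations of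
`γ = (x z) σ (w x)`, which fixes `x`, into two full cycles on the other `n` points. Nothing
contributes for `z = x` or `z = σ x`. If `z` lies `d + 1` steps after `x` in its cycle, `γ`
splits that cycle into cycles of lengths `k - 1 - d` and `d`; if `z` lies in another cycle, of
length `m`, `γ` merges the two cycles into one of length `k + m - 1`, the same for each of the
`m` choices of `z`.
-/

open Equiv Equiv.Perm Finset

section CycleTypeFull

variable {α β : Type*} [Fintype α] [DecidableEq α] [Fintype β] [DecidableEq β]

theorem cycleTypeFull_eq_add_replicate (σ : Perm α) :
    cycleTypeFull σ
      = σ.cycleType + Multiset.replicate (Fintype.card α - σ.cycleType.sum) 1 := by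
  rw [cycleTypeFull, sum_cycleType]

theorem cycleTypeFull_inv (σ : Perm α) : cycleTypeFull σ⁻¹ = cycleTypeFull σ := by
  simp only [cycleTypeFull_eq_add_replicate, cycleType_inv]

theorem cycleTypeFull_permCongr (e : α ≃ β) (σ : Perm α) :
    cycleTypeFull (e.permCongr σ) = cycleTypeFull σ := by
  have : e.permCongr σ
      = σ.extendDomain (e.trans (Equiv.subtypeUnivEquiv fun _ => trivial).symm) := by
    ext b
    rw [extendDomain_apply_subtype _ _ trivial]
    simp [Equiv.subtypeUnivEquiv]
  rw [cycleTypeFull_eq_add_replicate, cycleTypeFull_eq_add_replicate, this,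
    cycleType_extendDomain, Fintype.card_congr e]

theorem card_subtype_ne_add_one (x : α) : Fintype.card {y // y ≠ x} + 1 = Fintype.card α := by
  rw [Fintype.card_subtype_compl, Fintype.card_subtype_eq]
  have := Fintype.card_pos_iff.mpr ⟨x⟩
  omega

theorem cycleTypeFull_ofSubtype {x : α} (τ : Perm {y // y ≠ x}) :
    cycleTypeFull (ofSubtype τ) = 1 ::ₘ cycleTypeFull τ := by
  rw [cycleTypeFull_eq_add_replicate, cycleTypeFull_eq_add_replicate, cycleType_ofSubtype,
    ← card_subtype_ne_add_one x, Nat.sub_add_comm (sum_cycleType_le τ), Multiset.replicate_succ,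
    Multiset.add_cons]

end CycleTypeFull

theorem Multiset.filter_add_replicate_eq_self {s : Multiset ℕ} (hs : 0 ∉ s) :
    s.filter (2 ≤ ·) + replicate (s.sum - (s.filter (2 ≤ ·)).sum) 1 = s := by
  have hones : s.filter (¬ 2 ≤ ·) = replicate (s.filter (¬ 2 ≤ ·)).sum 1 := by
    have h1 : ∀ a ∈ s.filter (¬ 2 ≤ ·), a = 1 := by
      intro a ha
      rw [mem_filter] at ha
      have : a ≠ 0 := by rintro rfl; exact hs ha.1
      omega
    rw [eq_replicate_card.mpr h1]
    simp
  have hsum : s.sum = (s.filter (2 ≤ ·)).sum + (s.filter (¬ 2 ≤ ·)).sum := by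
    rw [← sum_add, filter_add_not]
  rw [hsum, Nat.add_sub_cancel_left, ← hones, filter_add_not]

section FormPerm

variable {α : Type*} [DecidableEq α]

theorem Equiv.Perm.ofSubtype_formPerm {p : α → Prop} [DecidablePred p] (l : List (Subtype p)) :
    ofSubtype l.formPerm = (l.map Subtype.val).formPerm := by
  induction l with
  | nil => simp
  | cons a l ih =>
    cases l with
    | nil => simp
    | cons b l =>
      rw [List.formPerm_cons_cons, map_mul, ofSubtype_swap_eq, ih, List.map_cons, List.map_cons,
        List.map_cons, List.formPerm_cons_cons]

theorem exists_ofSubtype_eq {π : Perm α} {x : α} (h : π x = x) :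
    ∃ τ : Perm {y // y ≠ x}, ofSubtype τ = π :=
  ⟨π.subtypePerm fun _ =>
      not_congr ⟨fun hy => π.injective (hy.trans h.symm), fun hy => hy ▸ h⟩,
    ofSubtype_subtypePerm _ fun _ hy hyx => hy (hyx ▸ h)⟩

theorem List.formPerm_map_perm (f : Equiv.Perm α) (l : List α) :
    (l.map f).formPerm = f * l.formPerm * f⁻¹ := by
  induction l with
  | nil => simp
  | cons a l ih =>
    cases l with
    | nil => simp
    | cons b l =>
      rw [map_cons, map_cons, formPerm_cons_cons, ← map_cons, ih, formPerm_cons_cons,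
        swap_apply_apply]
      group

theorem List.formPerm_cons_mul_swap {x y : α} {t : List α} (hx : x ∉ t) (hy : y ∉ t) :
    (x :: t).formPerm * Equiv.swap x y = Equiv.swap x y * (y :: t).formPerm := by
  have hmap : (y :: t).map (Equiv.swap x y) = x :: t := by
    rw [map_cons, swap_apply_right, map_congr_left fun a ha =>
      swap_apply_of_ne_of_ne (ne_of_mem_of_not_mem ha hx) (ne_of_mem_of_not_mem ha hy), map_id']
  rw [← hmap, formPerm_map_perm, swap_inv, mul_swap_mul_self]

theorem List.formPerm_cons_append {x : α} {b t : List α} (h : (x :: (b ++ t)).Nodup) :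
    (x :: (b ++ t)).formPerm = (x :: t).formPerm * (x :: b).formPerm := by
  induction b generalizing x with
  | nil => simp
  | cons y b ih =>
    have hy := (nodup_cons.mp h).2
    simp only [cons_append, nodup_cons, mem_cons, mem_append, not_or] at h hy
    rw [cons_append, formPerm_cons_cons, ih (by simpa using hy), ← mul_assoc,
      ← formPerm_cons_mul_swap h.1.2.2 hy.1.2, formPerm_cons_cons, mul_assoc]

theorem List.formPerm_cons_eq_mul_swap {x : α} {a : List α} (ha : a ≠ []) (h : (x :: a).Nodup) :
    (x :: a).formPerm = a.formPerm * Equiv.swap (a.getLast ha) x := by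
  have hrot : (x :: a).rotate 1 = a.dropLast ++ [a.getLast ha, x] := by
    conv_lhs => rw [← dropLast_append_getLast ha]
    simp
  rw [← formPerm_rotate_one _ h, hrot, formPerm_append_pair, dropLast_append_getLast ha]

theorem swap_mul_mul_swap_of_split {x z : α} {a b : List α} (ha : a ≠ [])
    (hnd : (x :: (a ++ z :: b)).Nodup) {ρ : Perm α} (hρx : ρ x = x)
    (hρw : ρ (a.getLast ha) = a.getLast ha) :
    swap x z * ((x :: (a ++ z :: b)).formPerm * ρ) * swap (a.getLast ha) x
      = (z :: b).formPerm * (a.formPerm * ρ) := by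
  have hcomm : ρ * swap (a.getLast ha) x = swap (a.getLast ha) x * ρ := by
    rw [mul_swap_eq_swap_mul, hρw, hρx]
  rw [List.formPerm_cons_append hnd, List.formPerm_cons_cons,
    List.formPerm_cons_eq_mul_swap ha (hnd.sublist ((List.sublist_append_left a _).cons_cons x))]
  simp only [mul_assoc, hcomm, swap_mul_self_mul]

theorem swap_mul_mul_swap_of_merge {x z : α} {b t : List α} (hnd : (x :: (z :: b ++ t)).Nodup)
    {ρ : Perm α} (hρx : ρ x = x)
    (hρw : ρ ((z :: b).getLast (List.cons_ne_nil z b))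
      = (z :: b).getLast (List.cons_ne_nil z b)) :
    swap x z * ((x :: t).formPerm * ((z :: b).formPerm * ρ))
        * swap ((z :: b).getLast (List.cons_ne_nil z b)) x
      = (z :: (b ++ t)).formPerm * ρ := by
  set w := (z :: b).getLast (List.cons_ne_nil z b)
  have hcomm : ρ * swap w x = swap w x * ρ := by
    rw [mul_swap_eq_swap_mul, hρw, hρx]
  have hjoin := List.formPerm_cons_append hnd
  rw [List.cons_append, List.formPerm_cons_cons, List.formPerm_cons_eq_mul_swap
    (List.cons_ne_nil z b) (hnd.sublist ((List.sublist_append_left _ _).cons_cons x))] at hjoin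
  calc swap x z * ((x :: t).formPerm * ((z :: b).formPerm * ρ)) * swap w x
      = swap x z * ((x :: t).formPerm * ((z :: b).formPerm * swap w x)) * ρ := by
        simp only [mul_assoc, hcomm]
    _ = (z :: (b ++ t)).formPerm * ρ := by rw [← hjoin, swap_mul_self_mul]

end FormPerm

section CyclePartition

variable {α : Type*}

theorem prod_map_formPerm_apply_of_notMem [DecidableEq α] {L : List (List α)} {a : α}
    (ha : a ∉ L.flatten) : (L.map List.formPerm).prod a = a := by
  induction L with
  | nil => rfl
  | cons b L ih =>
    simp only [List.flatten_cons, List.mem_append, not_or] at ha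
    simp only [List.map_cons, List.prod_cons, Perm.mul_apply, ih ha.2,
      List.formPerm_apply_of_notMem ha.1]

theorem disjoint_formPerm_prod_map_formPerm [DecidableEq α] {b : List α} {L : List (List α)}
    (h : (b :: L).flatten.Nodup) : Perm.Disjoint b.formPerm (L.map List.formPerm).prod := by
  intro a
  by_cases hb : a ∈ b
  · exact .inr (prod_map_formPerm_apply_of_notMem
      fun ha => (List.nodup_append.mp h).2.2 a hb a ha rfl)
  · exact .inl (List.formPerm_apply_of_notMem hb)

theorem prod_map_formPerm_eq_of_perm [DecidableEq α] {L L' : List (List α)}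
    (hL : L.flatten.Nodup) (h : L.Perm L') :
    (L.map List.formPerm).prod = (L'.map List.formPerm).prod := by
  refine (h.map _).prod_eq' (List.Pairwise.map _ (fun b c hbc => Perm.Disjoint.commute ?_)
    (List.nodup_flatten.mp hL).2)
  intro a
  by_cases hb : a ∈ b
  · exact .inr (List.formPerm_apply_of_notMem (hbc hb))
  · exact .inl (List.formPerm_apply_of_notMem hb)

theorem cycleType_prod_map_formPerm [Fintype α] [DecidableEq α] {L : List (List α)}
    (hL : L.flatten.Nodup) :
    (L.map List.formPerm).prod.cycleType = ((L.map List.length).filter (2 ≤ ·) : List ℕ) := by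
  induction L with
  | nil => simp
  | cons b L ih =>
    rw [List.map_cons, List.prod_cons, (disjoint_formPerm_prod_map_formPerm hL).cycleType_mul,
      ih (List.nodup_append.mp hL).2.1]
    have hb : b.Nodup := (List.nodup_append.mp hL).1
    by_cases h2 : 2 ≤ b.length
    · rw [(List.isCycle_formPerm hb h2).cycleType, List.support_formPerm_of_nodup b hb
        (by rintro a rfl; simp at h2), List.toFinset_card_of_nodup hb]
      simp [h2]
    · rw [(List.formPerm_eq_one_iff _ hb).mpr (by omega)]
      simp [h2]

/-- `L` is cycle notation for the permutation `(L.map List.formPerm).prod` of `α`, with every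
point listed exactly once (fixed points as singletons). -/
def IsCyclePartition [Fintype α] (L : List (List α)) : Prop :=
  L.flatten.Nodup ∧ L.flatten.length = Fintype.card α ∧ [] ∉ L

variable [Fintype α]

theorem IsCyclePartition.of_perm {L L' : List (List α)} (h : IsCyclePartition L)
    (hp : L'.flatten.Perm L.flatten) (hne : [] ∉ L') : IsCyclePartition L' :=
  ⟨hp.nodup_iff.mpr h.1, hp.length_eq.trans h.2.1, hne⟩

theorem IsCyclePartition.cycleTypeFull_prod [DecidableEq α] {L : List (List α)}
    (h : IsCyclePartition L) :
    cycleTypeFull (L.map List.formPerm).prod = (L.map List.length : List ℕ) := by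
  obtain ⟨hnd, hcard, hne⟩ := h
  have hs : (0 : ℕ) ∉ ((L.map List.length : List ℕ) : Multiset ℕ) := by
    simpa [List.length_eq_zero_iff] using hne
  rw [cycleTypeFull_eq_add_replicate, cycleType_prod_map_formPerm hnd, ← Multiset.filter_coe,
    ← hcard, List.length_flatten, ← Multiset.sum_coe, Multiset.filter_add_replicate_eq_self hs]

theorem exists_isCyclePartition {P : List ℕ} (hsum : P.sum = Fintype.card α) (h0 : 0 ∉ P) :
    ∃ L : List (List α), IsCyclePartition L ∧ L.map List.length = P := by
  have hlen : (univ : Finset α).toList.length = P.sum := by simp [hsum]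
  have hmap := List.map_splitLengths_length _ P hlen.ge
  refine ⟨P.splitLengths univ.toList, ⟨?_, ?_, fun hnil => h0 ?_⟩, hmap⟩
  · rw [List.flatten_splitLengths _ _ hlen.le]
    exact nodup_toList _
  · rw [List.flatten_splitLengths _ _ hlen.le, hlen, hsum]
  · rw [← hmap]
    exact List.mem_map_of_mem hnil

theorem exists_isCyclePartition_of_mem_parts {N : ℕ} (hN : Fintype.card α = N)
    (lam : N.Partition) {k : ℕ} (hk : k ∈ lam.parts) :
    ∃ (x : α) (t : List α) (T : List (List α)), IsCyclePartition ((x :: t) :: T)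
      ∧ t.length + 1 = k
      ∧ ((T.map List.length : List ℕ) : Multiset ℕ) = lam.parts.erase k := by
  have hsum : (k :: (lam.parts.erase k).toList).sum = Fintype.card α := by
    rw [List.sum_cons, Multiset.sum_toList, Multiset.sum_erase hk, lam.parts_sum, hN]
  have h0 : 0 ∉ k :: (lam.parts.erase k).toList := by
    simp only [List.mem_cons, Multiset.mem_toList, not_or]
    exact ⟨(lam.parts_pos hk).ne, fun h => (lam.parts_pos (Multiset.mem_of_mem_erase h)).ne rfl⟩
  obtain ⟨_ | ⟨_ | ⟨x, t⟩, T⟩, hP, hlen⟩ := exists_isCyclePartition hsum h0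
  · simp at hlen
  · simp [eq_comm, (lam.parts_pos hk).ne'] at hlen
  simp only [List.map_cons, List.length_cons, List.cons.injEq] at hlen
  exact ⟨x, t, T, hP, hlen.1, by rw [hlen.2, Multiset.coe_toList]⟩

end CyclePartition

section FullCycle

variable {α β : Type*} [Fintype α] [DecidableEq α] [Fintype β] [DecidableEq β]

def IsFullCycle (π : Perm α) : Prop := cycleTypeFull π = {Fintype.card α}

instance : DecidablePred (IsFullCycle (α := α)) :=
  fun π => inferInstanceAs (Decidable (cycleTypeFull π = _))

theorem isFullCycle_inv {π : Perm α} : IsFullCycle π⁻¹ ↔ IsFullCycle π := by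
  rw [IsFullCycle, IsFullCycle, cycleTypeFull_inv]

theorem isFullCycle_permCongr (e : α ≃ β) {π : Perm α} :
    IsFullCycle (e.permCongr π) ↔ IsFullCycle π := by
  rw [IsFullCycle, IsFullCycle, cycleTypeFull_permCongr, Fintype.card_congr e]

theorem isFullCycle_formPerm {l : List α} (hl : l.Nodup) (hcard : l.length = Fintype.card α)
    (hne : l ≠ []) : IsFullCycle l.formPerm := by
  have hP : IsCyclePartition [l] := ⟨by simpa, by simpa, by simpa [eq_comm]⟩
  simpa [IsFullCycle, hcard] using hP.cycleTypeFull_prod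

theorem IsFullCycle.apply_ne {π : Perm α} (h : IsFullCycle π) (hα : 2 ≤ Fintype.card α)
    (a : α) : π a ≠ a := by
  intro ha
  obtain ⟨τ, rfl⟩ := exists_ofSubtype_eq ha
  rw [IsFullCycle, cycleTypeFull_ofSubtype, eq_comm, Multiset.singleton_eq_cons_iff] at h
  omega

theorem IsFullCycle.exists_formPerm_cons {π : Perm α} (h : IsFullCycle π) (a : α) :
    ∃ l, (a :: l).Nodup ∧ (a :: l).length = Fintype.card α ∧ (a :: l).formPerm = π := by
  rw [IsFullCycle, cycleTypeFull] at h
  by_cases hπ : π = 1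
  · subst hπ
    simp only [cycleType_one, support_one, Finset.card_empty, Nat.sub_zero, zero_add] at h
    have h1 : Fintype.card α = 1 := by simpa using congrArg Multiset.card h
    exact ⟨[], by simp, by simp [h1], List.formPerm_singleton a⟩
  · have hcard : Multiset.card π.cycleType + (Fintype.card α - #π.support) = 1 := by
      simpa using congrArg Multiset.card h
    have hcycle : π.IsCycle := card_cycleType_eq_one.mp
      (by have := Multiset.card_pos.mpr (mt cycleType_eq_zero.mp hπ); omega)
    have hsupp : #π.support = Fintype.card α := by
      have := π.support.card_le_univ
      have := card_cycleType_eq_one.mpr hcycle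
      omega
    have ha : a ∈ π.support := by
      rw [Finset.eq_univ_of_card _ hsupp]
      exact mem_univ a
    have hcycleOf : π.cycleOf a = π := hcycle.cycleOf_eq (mem_support.mp ha)
    obtain ⟨b, l, hbl⟩ := List.exists_cons_of_ne_nil (mt toList_eq_nil_iff.mp (not_not.mpr ha))
    obtain rfl : b = a := by simpa [hbl] using toList_getElem_zero π a ha
    refine ⟨l, hbl ▸ nodup_toList π b, ?_, ?_⟩
    · rw [← hbl, Perm.length_toList, hcycleOf, hsupp]
    · rw [← hbl, formPerm_toList, hcycleOf]

theorem isFullCycle_swap_mul_ofSubtype_iff {x z : α} (hz : z ≠ x) (τ : Perm {y // y ≠ x}) :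
    IsFullCycle (swap x z * ofSubtype τ) ↔ IsFullCycle τ := by
  have hcard := card_subtype_ne_add_one x
  constructor
  · intro h
    obtain ⟨l, hnd, hlen, hl⟩ := h.exists_formPerm_cons x
    have hx : (swap x z * ofSubtype τ) x = z := by
      simp [ofSubtype_apply_of_not_mem]
    obtain ⟨m, rfl⟩ : ∃ m, l = z :: m := by
      rcases l with _ | ⟨y, m⟩
      · simp [← hl] at hx
        exact absurd hx.symm hz
      · rw [← hl, List.formPerm_apply_head _ _ _ hnd] at hx
        exact ⟨m, by rw [hx]⟩
    have hτ : ofSubtype τ = (z :: m).formPerm := by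
      rw [← swap_mul_self_mul x z (ofSubtype τ), hl.symm, List.formPerm_cons_cons,
        swap_mul_self_mul]
    have hP : IsCyclePartition [[x], z :: m] :=
      ⟨by simpa using hnd, by simpa using hlen, by simp⟩
    have hm : m.length + 1 = Fintype.card {y // y ≠ x} := by
      simp only [List.length_cons] at hlen
      omega
    have hblocks := hP.cycleTypeFull_prod
    simp only [List.map_cons, List.map_nil, List.prod_cons, List.prod_nil, List.formPerm_singleton,
      one_mul, mul_one] at hblocks
    rw [IsFullCycle, ← Multiset.cons_inj_right 1, ← cycleTypeFull_ofSubtype, hτ, hblocks,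
      ← hm]
    rfl
  · intro h
    obtain ⟨l, hnd, hlen, hl⟩ := h.exists_formPerm_cons ⟨z, hz⟩
    rw [← hl, ofSubtype_formPerm, List.map_cons, ← List.formPerm_cons_cons]
    refine isFullCycle_formPerm ?_ ?_ (List.cons_ne_nil _ _)
    · refine List.nodup_cons.mpr ⟨?_, hnd.map Subtype.val_injective⟩
      simpa using hz.symm
    · simp only [List.length_cons, List.length_map] at hlen ⊢
      omega

theorem isFullCycle_ofSubtype_mul_swap_iff {x w : α} (hw : w ≠ x) (τ : Perm {y // y ≠ x}) :
    IsFullCycle (ofSubtype τ * swap w x) ↔ IsFullCycle τ := by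
  rw [← isFullCycle_inv, mul_inv_rev, swap_inv, swap_comm, ← map_inv,
    isFullCycle_swap_mul_ofSubtype_iff hw, isFullCycle_inv]

def fullCycleFactorizations (σ : Perm α) : Finset (Perm α × Perm α) :=
  {p | IsFullCycle p.1 ∧ IsFullCycle p.2 ∧ p.1 * p.2 = σ}

theorem card_fullCycleFactorizations_permCongr (e : α ≃ β) (σ : Perm α) :
    #(fullCycleFactorizations (e.permCongr σ)) = #(fullCycleFactorizations σ) := by
  refine (Finset.card_equiv (e.permCongr.prodCongr e.permCongr) fun p => ?_).symm
  simp [fullCycleFactorizations, isFullCycle_permCongr, ← permCongr_mul]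

theorem card_filter_fullCycleFactorizations_apply_eq {x z w : α} (hz : z ≠ x) (hw : w ≠ x)
    (γ : Perm {y // y ≠ x}) :
    #{p ∈ fullCycleFactorizations (swap x z * ofSubtype γ * swap w x) | p.1 x = z}
      = #(fullCycleFactorizations γ) := by
  set lift : Perm {y // y ≠ x} × Perm {y // y ≠ x} → Perm α × Perm α :=
    fun q => (swap x z * ofSubtype q.1, ofSubtype q.2 * swap w x)
  have hlift : Function.Injective lift := by
    rintro ⟨q₁, q₂⟩ ⟨r₁, r₂⟩ h
    simp only [lift, Prod.mk.injEq, mul_left_cancel_iff, mul_right_cancel_iff] at h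
    simp [ofSubtype_injective h.1, ofSubtype_injective h.2]
  rw [← card_image_of_injective _ hlift]
  congr 1
  ext ⟨τ, ρ⟩
  simp only [fullCycleFactorizations, mem_filter, mem_univ, true_and, mem_image, Prod.exists,
    lift, Prod.mk.injEq]
  constructor
  · rintro ⟨⟨hτ, hρ, hτρ⟩, hτx⟩
    have hρw : ρ w = x := by
      apply τ.injective
      rw [← Perm.mul_apply, hτρ, hτx]
      simp [ofSubtype_apply_of_not_mem]
    obtain ⟨q₁, hq₁⟩ := exists_ofSubtype_eq (π := swap x z * τ) (x := x) (by simp [hτx])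
    obtain ⟨q₂, hq₂⟩ := exists_ofSubtype_eq (π := ρ * swap w x) (x := x) (by simp [hρw])
    refine ⟨q₁, q₂, ⟨?_, ?_, ?_⟩, ?_, ?_⟩
    · rwa [← isFullCycle_swap_mul_ofSubtype_iff hz, hq₁, swap_mul_self_mul]
    · rwa [← isFullCycle_ofSubtype_mul_swap_iff hw, hq₂, mul_swap_mul_self]
    · apply ofSubtype_injective
      rw [map_mul, hq₁, hq₂, ← mul_assoc, mul_assoc _ τ, hτρ]
      simp only [← mul_assoc, swap_mul_self, one_mul, mul_swap_mul_self]
    · rw [hq₁, swap_mul_self_mul]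
    · rw [hq₂, mul_swap_mul_self]
  · rintro ⟨q₁, q₂, ⟨hq₁, hq₂, hq⟩, rfl, rfl⟩
    refine ⟨⟨(isFullCycle_swap_mul_ofSubtype_iff hz _).mpr hq₁,
      (isFullCycle_ofSubtype_mul_swap_iff hw _).mpr hq₂, ?_⟩, ?_⟩
    · rw [← hq, map_mul]
      group
    · simp [ofSubtype_apply_of_not_mem]

theorem card_filter_fullCycleFactorizations_apply_self (hα : 2 ≤ Fintype.card α) (σ : Perm α)
    (x : α) : #{p ∈ fullCycleFactorizations σ | p.1 x = x} = 0 := by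
  simp only [card_eq_zero, filter_eq_empty_iff, fullCycleFactorizations, mem_filter, mem_univ,
    true_and]
  exact fun p hp => hp.1.apply_ne hα x

theorem card_filter_fullCycleFactorizations_apply_apply (hα : 2 ≤ Fintype.card α) (σ : Perm α)
    (x : α) : #{p ∈ fullCycleFactorizations σ | p.1 x = σ x} = 0 := by
  simp only [card_eq_zero, filter_eq_empty_iff, fullCycleFactorizations, mem_filter, mem_univ,
    true_and]
  rintro p ⟨-, hp₂, hp⟩ hpx
  refine hp₂.apply_ne hα x (p.1.injective ?_)
  rw [hpx, ← hp, Perm.mul_apply]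

end FullCycle

theorem cFactCount_eq_card (m : ℕ) (σ : Perm (Fin m)) :
    cFactCount m σ = #(fullCycleFactorizations σ) := by
  simp [cFactCount, fullCycleFactorizations, IsFullCycle]

section Recurrence

variable (c : (m : ℕ) → Multiset ℕ → ℕ)
  (hc : ∀ (m : ℕ) (σ : Perm (Fin m)), c m (cycleTypeFull σ) = cFactCount m σ)
  {n : ℕ} {x : Fin (n + 1)} {t : List (Fin (n + 1))} {T : List (List (Fin (n + 1)))}

include hc

theorem card_fiber_eq_of_isCyclePartition {σ : Perm (Fin (n + 1))} {z w : Fin (n + 1)}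
    (hz : z ≠ x) (hw : w ≠ x) {L : List (List (Fin (n + 1)))} (hL : IsCyclePartition ([x] :: L))
    (hσ : swap x z * σ * swap w x = (L.map List.formPerm).prod) :
    #{p ∈ fullCycleFactorizations σ | p.1 x = z} = c n (L.map List.length : List ℕ) := by
  have hxL : x ∉ L.flatten := (List.nodup_cons.mp hL.1).1
  obtain ⟨γ, hγ⟩ := exists_ofSubtype_eq (prod_map_formPerm_apply_of_notMem hxL)
  have hσγ : σ = swap x z * ofSubtype γ * swap w x := by
    rw [hγ, ← hσ]
    simp only [← mul_assoc, swap_mul_self, one_mul, mul_swap_mul_self]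
  have hγtype : cycleTypeFull γ = (L.map List.length : List ℕ) := by
    rw [← Multiset.cons_inj_right 1, ← cycleTypeFull_ofSubtype, hγ]
    have h := hL.cycleTypeFull_prod
    rwa [List.map_cons, List.prod_cons, List.formPerm_singleton, one_mul] at h
  let e : {y // y ≠ x} ≃ Fin n := Fintype.equivFinOfCardEq (by simp)
  rw [hσγ, card_filter_fullCycleFactorizations_apply_eq hz hw,
    ← card_fullCycleFactorizations_permCongr e, ← cFactCount_eq_card, ← hc,
    cycleTypeFull_permCongr, hγtype]

theorem card_fiber_of_split (hP : IsCyclePartition ((x :: t) :: T)) {a b : List (Fin (n + 1))}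
    {z : Fin (n + 1)} (ht : t = a ++ z :: b) (ha : a ≠ []) :
    #{p ∈ fullCycleFactorizations (((x :: t) :: T).map List.formPerm).prod | p.1 x = z}
      = c n ((z :: b).length ::ₘ a.length ::ₘ (T.map List.length : List ℕ)) := by
  subst ht
  have hP' : IsCyclePartition ([x] :: (z :: b) :: a :: T) := by
    refine hP.of_perm ?_ (by simpa [eq_comm, ha] using hP.2.2)
    rw [List.perm_iff_count]
    intro y
    simp only [List.flatten_cons, List.count_append, List.count_cons, List.count_nil]
    omega
  obtain ⟨hK, -, hdisj⟩ := List.nodup_append.mp hP.1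
  have hnotT {y} (hy : y ∈ x :: (a ++ z :: b)) : y ∉ T.flatten := fun h => hdisj y hy y h rfl
  have hwK : a.getLast ha ∈ x :: (a ++ z :: b) := by simp [List.getLast_mem]
  have hxK := (List.nodup_cons.mp hK).1
  have hzx : z ≠ x := by rintro rfl; simp at hxK
  have hwx : a.getLast ha ≠ x := by rintro h; simp [← h, List.getLast_mem] at hxK
  refine card_fiber_eq_of_isCyclePartition c hc hzx hwx hP' ?_
  simp only [List.map_cons, List.prod_cons]
  exact swap_mul_mul_swap_of_split ha hK (prod_map_formPerm_apply_of_notMem (hnotT (by simp)))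
    (prod_map_formPerm_apply_of_notMem (hnotT hwK))

theorem card_fiber_of_merge (hP : IsCyclePartition ((x :: t) :: T)) {B : List (Fin (n + 1))}
    (hB : B ∈ T) {z : Fin (n + 1)} (hz : z ∈ B) :
    #{p ∈ fullCycleFactorizations (((x :: t) :: T).map List.formPerm).prod | p.1 x = z}
      = c n ((t.length + B.length) ::ₘ (T.map List.length : Multiset ℕ).erase B.length) := by
  obtain ⟨b, hr⟩ : ∃ b, B ~r (z :: b) := by
    obtain ⟨l₁, l₂, rfl⟩ := List.append_of_mem hz
    exact ⟨l₂ ++ l₁, List.isRotated_append⟩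
  have hT := List.perm_cons_erase hB
  have hP' : IsCyclePartition ([x] :: (z :: (b ++ t)) :: T.erase B) := by
    refine hP.of_perm ?_ ?_
    · have h := hT.flatten.trans (hr.perm.append_right _)
      rw [List.perm_iff_count] at h ⊢
      intro y
      have := h y
      simp only [List.flatten_cons, List.count_append, List.count_cons, List.count_nil] at this ⊢
      omega
    · have := hP.2.2
      simp only [List.mem_cons, not_or] at this ⊢
      exact ⟨by simp, by simp, fun h => this.2 (List.mem_of_mem_erase h)⟩
  have hnd : (x :: (z :: b ++ t) ++ (T.erase B).flatten).Nodup := hP'.1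
  obtain ⟨hK, -, hdisj⟩ := List.nodup_append.mp hnd
  have hnotT {y} (hy : y ∈ x :: (z :: b ++ t)) : y ∉ (T.erase B).flatten :=
    fun h => hdisj y hy y h rfl
  have hxK := (List.nodup_cons.mp hK).1
  have hzx : z ≠ x := by rintro rfl; simp at hxK
  have hwb : (z :: b).getLast (List.cons_ne_nil z b) ∈ z :: b ++ t :=
    List.mem_append_left _ (List.getLast_mem _)
  have hwx : (z :: b).getLast (List.cons_ne_nil z b) ≠ x := by
    rintro h
    rw [h] at hwb
    exact hxK hwb
  have hσ : (((x :: t) :: T).map List.formPerm).prod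
      = (x :: t).formPerm * ((z :: b).formPerm * ((T.erase B).map List.formPerm).prod) := by
    rw [prod_map_formPerm_eq_of_perm hP.1 (hT.cons _)]
    simp only [List.map_cons, List.prod_cons]
    rw [List.formPerm_eq_of_isRotated ((List.nodup_flatten.mp hP.1).1 B (by simp [hB])) hr]
  have hlen : ((T.map List.length : List ℕ) : Multiset ℕ)
      = B.length ::ₘ ((T.erase B).map List.length : List ℕ) :=
    Multiset.coe_eq_coe.mpr (hT.map _)
  rw [hlen, Multiset.erase_cons_head, hr.perm.length_eq]
  refine (card_fiber_eq_of_isCyclePartition c hc hzx hwx hP' ?_).trans ?_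
  · rw [hσ]
    simp only [List.map_cons, List.prod_cons]
    exact swap_mul_mul_swap_of_merge hK (prod_map_formPerm_apply_of_notMem (hnotT (by simp)))
      (prod_map_formPerm_apply_of_notMem (hnotT (List.mem_cons_of_mem _ hwb)))
  · simp only [List.map_cons, List.length_cons, List.length_append]
    congr 3
    omega

theorem sum_card_fiber_of_split (hn : 1 ≤ n) (hP : IsCyclePartition ((x :: t) :: T)) :
    (t.map fun z =>
        #{p ∈ fullCycleFactorizations (((x :: t) :: T).map List.formPerm).prod | p.1 x = z}).sum
      = ∑ d ∈ Icc 1 (t.length - 1),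
          c n ((t.length - d) ::ₘ d ::ₘ (T.map List.length : Multiset ℕ)) := by
  set σ := (((x :: t) :: T).map List.formPerm).prod
  rcases t with _ | ⟨t₀, t'⟩
  · simp
  obtain ⟨hK, -, hdisj⟩ := List.nodup_append.mp hP.1
  have hσx : σ x = t₀ := by
    simp only [σ, List.map_cons, List.prod_cons, Perm.mul_apply]
    rw [prod_map_formPerm_apply_of_notMem (fun h => hdisj x (by simp) x h rfl),
      List.formPerm_apply_head _ _ _ hK]
  have hzero : #{p ∈ fullCycleFactorizations σ | p.1 x = t₀} = 0 :=
    hσx ▸ card_filter_fullCycleFactorizations_apply_apply (by simp; omega) σ x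
  set g : ℕ → ℕ :=
    fun d => c n ((t'.length + 1 - d) ::ₘ d ::ₘ (T.map List.length : Multiset ℕ))
  have hsplit (i : ℕ) (hi : i < t'.length) :
      #{p ∈ fullCycleFactorizations σ | p.1 x = t'[i]} = g (i + 1) := by
    have ht : t₀ :: t' = (t₀ :: t'.take i) ++ t'[i] :: t'.drop (i + 1) := by
      rw [List.cons_append, List.getElem_cons_drop, List.take_append_drop]
    rw [card_fiber_of_split c hc hP ht (List.cons_ne_nil _ _)]
    simp only [g, List.length_cons, List.length_drop, List.length_take]
    congr 3 <;> omega
  rw [List.map_cons, List.sum_cons, hzero, zero_add, ← Fin.sum_univ_fun_getElem,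
    Finset.sum_congr rfl fun (i : Fin t'.length) _ => hsplit i i.2,
    Fin.sum_univ_eq_sum_range (fun i => g (i + 1)), ← Finset.Ico_add_one_right_eq_Icc,
    Finset.sum_Ico_eq_sum_range]
  simp [add_comm, g]

theorem sum_card_fiber_of_merge (hP : IsCyclePartition ((x :: t) :: T)) :
    (T.flatten.map fun z =>
        #{p ∈ fullCycleFactorizations (((x :: t) :: T).map List.formPerm).prod | p.1 x = z}).sum
      = ((T.map List.length : Multiset ℕ).map fun m =>
          m * c n ((t.length + m) ::ₘ (T.map List.length : Multiset ℕ).erase m)).sum := by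
  rw [List.map_flatten, List.sum_flatten, List.map_map, Multiset.map_coe, Multiset.sum_coe,
    List.map_map]
  refine congrArg List.sum (List.map_congr_left fun B hB => ?_)
  rw [Function.comp_apply, List.map_congr_left fun z hz => card_fiber_of_merge c hc hP hB hz,
    List.map_const', List.sum_replicate, smul_eq_mul, Function.comp_apply]

theorem card_fullCycleFactorizations_eq_sum (hn : 1 ≤ n) (hP : IsCyclePartition ((x :: t) :: T)) :
    #(fullCycleFactorizations (((x :: t) :: T).map List.formPerm).prod)
      = (∑ d ∈ Icc 1 (t.length - 1),
          c n ((t.length - d) ::ₘ d ::ₘ (T.map List.length : Multiset ℕ)))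
        + ((T.map List.length : Multiset ℕ).map fun m =>
            m * c n ((t.length + m) ::ₘ (T.map List.length : Multiset ℕ).erase m)).sum := by
  have huniv : ((x :: t) :: T).flatten.toFinset = univ :=
    eq_univ_of_card _ (by rw [List.toFinset_card_of_nodup hP.1, hP.2.1])
  rw [card_eq_sum_card_fiberwise (f := fun p => p.1 x) (t := univ) (fun _ _ => mem_univ _),
    ← huniv, List.sum_toFinset _ hP.1, List.flatten_cons, List.map_append, List.sum_append,
    List.map_cons, List.sum_cons, card_filter_fullCycleFactorizations_apply_self (by simp; omega),
    zero_add, sum_card_fiber_of_split c hc hn hP, sum_card_fiber_of_merge c hc hP]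

end Recurrence

/-- Recurrence for the class algebra connection coefficients `c^λ_{n+1,n+1}`:
for any function `c` assigning to each cycle type the number of factorizations of a
permutation of that type as a product of two full cycles (such a function is well
defined since the count only depends on the conjugacy class), and any part `k` of a
partition `λ` of `n+1`,
`c^λ_{n+1,n+1} = Σ_{d=1}^{k−2} c^{λ↑(k−1−d,d)}_{nn} + Σ_{j≠i} λ_j c^{λ↓(k,λ_j)}_{nn}`. -/
theorem stmt12 (c : (m : ℕ) → Multiset ℕ → ℕ)
    (hc : ∀ (m : ℕ) (σ : Equiv.Perm (Fin m)), c m (cycleTypeFull σ) = cFactCount m σ)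
    (n : ℕ) (hn : 1 ≤ n) (lam : Nat.Partition (n + 1)) (k : ℕ) (hk : k ∈ lam.parts) :
    c (n + 1) lam.parts
      = (∑ d ∈ Finset.Icc 1 (k - 2), c n ((k - 1 - d) ::ₘ d ::ₘ lam.parts.erase k))
        + ((lam.parts.erase k).map fun m =>
            m * c n ((k + m - 1) ::ₘ (lam.parts.erase k).erase m)).sum := by
  obtain ⟨x, t, T, hP, rfl, hE⟩ :=
    exists_isCyclePartition_of_mem_parts (Fintype.card_fin _) lam hk
  have hcount : c (n + 1) lam.parts
      = #(fullCycleFactorizations (((x :: t) :: T).map List.formPerm).prod) := by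
    rw [← cFactCount_eq_card, ← hc, hP.cycleTypeFull_prod, List.map_cons, ← Multiset.cons_coe,
      hE, List.length_cons, Multiset.cons_erase hk]
  rw [hcount, card_fullCycleFactorizations_eq_sum c hc hn hP, hE,
    show t.length + 1 - 2 = t.length - 1 by omega]
  simp_rw [Nat.add_sub_cancel, Nat.add_right_comm t.length 1, Nat.add_sub_cancel]
end

section
/- Define linear operators on formal symbols a^λ (λ a partition containing parts i and r): Ξ_i a^λ = a^{λ↓(i)}, Ω_{i,d} a^λ = a^{λ↑(i−1−d,d)}, Φ_{i,j} a^λ = a^{λ↓(i,j)}, and Θ_i = (α−1)(i−1)Ξ_i + Σ_{d=1}^{i−2} Ω_{i,d} + α Σ_j j(m_j(λ)−δ_{ij}) Φ_{i,j}. Then for all integers i, r, the identity Θ_r(Θ_i − α r Φ_{i,r}) = Θ_i(Θ_r − α i Φ_{i,r}) + α(i−r) Θ_{i+r−1} Φ_{i,r} holds on symbols a^λ with λ containing both a part i and a part r. -/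
/-!
Send `a^μ` to the monomial `X^μ = ∏_{k ∈ μ} X_k` of `MvPolynomial ℕ F`. Then
`Θ_n a^μ = G_n X^{μ ∖ n}` with `G_n = m_n + D_n` (`cutJoin`), where `m_n` is multiplication by
`(α-1)(n-1) X_{n-1} + Σ_{d=1}^{n-2} X_{n-1-d} X_d` (`cutPoly`) and `D_n` is the derivation
`X_j ↦ α j X_{n+j-1}` (`joinDerivation`).
Leibniz gives `G_n (X_u f) = X_u G_n f + α u X_{n+u-1} f`, so for `λ = {i, r} ∪ κ` the terms
`α r Φ_{i,r}` and `α i Φ_{i,r}` cancel exactly the extra terms, and the identity becomes the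
commutation relation `G_r G_i = G_i G_r + α(i-r) G_{i+r-1}` applied to `X^κ`. This splits into
`[D_r, D_i] = α(i-r) D_{i+r-1}`, checked on generators, and
`D_r m_i - D_i m_r = α(i-r) m_{i+r-1}`, which after reindexing is the pointwise identity
`(x - y)₊ - (y - x)₊ = x - y` for the coefficients.
-/

open Finset

noncomputable section

variable {F : Type*} [Field F]

/-- The image of the basis symbol `a^λ` under
`Θ_i = (α−1)(i−1)Ξ_i + Σ_{d=1}^{i−2} Ω_{i,d} + α Σ_j j(m_j(λ)−δ_{ij}) Φ_{i,j}`, where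
`Ξ_i a^λ = a^{λ↓(i)}`, `Ω_{i,d} a^λ = a^{λ↑(i−1−d,d)}` and `Φ_{i,j} a^λ = a^{λ↓(i,j)}`.
Basis symbols are the `Finsupp.single lam 1` in the space `Multiset ℕ →₀ F`. -/
def vTheta (α : F) (i : ℕ) (lam : Multiset ℕ) : Multiset ℕ →₀ F :=
  ((α - 1) * ((i - 1 : ℕ) : F)) • Finsupp.single ((i - 1) ::ₘ lam.erase i) (1 : F)
    + ∑ d ∈ Finset.Icc 1 (i - 2), Finsupp.single ((i - 1 - d) ::ₘ d ::ₘ lam.erase i) (1 : F)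
    + α • ∑ j ∈ lam.toFinset,
        ((j : F) * ((lam.count j - if i = j then 1 else 0 : ℕ) : F)) •
          Finsupp.single ((i + j - 1) ::ₘ (lam.erase i).erase j) (1 : F)

/-- The linear operator `Θ_i` on the formal vector space spanned by the symbols `a^λ`. -/
def ThetaOp (α : F) (i : ℕ) : (Multiset ℕ →₀ F) →ₗ[F] (Multiset ℕ →₀ F) :=
  Finsupp.lsum ℕ fun lam => LinearMap.toSpanSingleton F _ (vTheta α i lam)

/-- The linear operator `Φ_{i,r} : a^λ ↦ a^{λ↓(i,r)}`. -/
def PhiOp (i r : ℕ) : (Multiset ℕ →₀ F) →ₗ[F] (Multiset ℕ →₀ F) :=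
  Finsupp.lsum ℕ fun lam =>
    LinearMap.toSpanSingleton F _ (Finsupp.single ((i + r - 1) ::ₘ (lam.erase i).erase r) (1 : F))

open MvPolynomial

lemma Multiset.count_erase {β : Type*} [DecidableEq β] (μ : Multiset β) (a b : β) :
    (μ.erase b).count a = μ.count a - if b = a then 1 else 0 := by
  by_cases h : b = a
  · subst h; simp [Multiset.count_erase_self]
  · simp [Multiset.count_erase_of_ne (Ne.symm h), h]

lemma Multiset.toFinsupp_erase {β : Type*} [DecidableEq β] (μ : Multiset β) (b : β) :
    Multiset.toFinsupp (μ.erase b) = Multiset.toFinsupp μ - Finsupp.single b 1 := by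
  ext a
  simp [Multiset.count_erase, Finsupp.single_apply]

lemma natCast_tsub_sub_natCast_tsub {R : Type*} [AddGroupWithOne R] (x y : ℕ) :
    ((x - y : ℕ) : R) - ((y - x : ℕ) : R) = x - y := by
  rcases le_total y x with h | h <;> simp [Nat.cast_sub h, Nat.sub_eq_zero_of_le h]

def symbolEquiv : (Multiset ℕ →₀ F) ≃ₗ[F] MvPolynomial ℕ F :=
  (Finsupp.domLCongr Multiset.toFinsupp.toEquiv).trans (basisMonomials ℕ F).repr.symm

lemma symbolEquiv_single (μ : Multiset ℕ) (c : F) :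
    symbolEquiv (Finsupp.single μ c) = monomial (Multiset.toFinsupp μ) c := by
  simp [symbolEquiv, smul_monomial]

lemma symbolEquiv_single_cons (u : ℕ) (μ : Multiset ℕ) (c : F) :
    symbolEquiv (Finsupp.single (u ::ₘ μ) c) = X u * symbolEquiv (Finsupp.single μ c) := by
  rw [symbolEquiv_single, symbolEquiv_single, ← Multiset.singleton_add, map_add,
    Multiset.toFinsupp_singleton, X, monomial_mul, one_mul]

def cutPoly (α : F) (n : ℕ) : MvPolynomial ℕ F :=
  ((α - 1) * ((n - 1 : ℕ) : F)) • X (n - 1) + ∑ d ∈ Icc 1 (n - 2), X (n - 1 - d) * X d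

def joinDerivation (α : F) (n : ℕ) : Derivation F (MvPolynomial ℕ F) (MvPolynomial ℕ F) :=
  mkDerivation F fun j => (α * j) • X (n + j - 1)

def cutJoin (α : F) (n : ℕ) : MvPolynomial ℕ F →ₗ[F] MvPolynomial ℕ F :=
  LinearMap.mulLeft F (cutPoly α n)
    + (joinDerivation α n : MvPolynomial ℕ F →ₗ[F] MvPolynomial ℕ F)

lemma joinDerivation_X (α : F) (n j : ℕ) :
    joinDerivation α n (X j) = (α * j) • X (n + j - 1) :=
  mkDerivation_X _ _ _

lemma cutJoin_apply (α : F) (n : ℕ) (f : MvPolynomial ℕ F) :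
    cutJoin α n f = cutPoly α n * f + joinDerivation α n f := rfl

lemma cutJoin_X_mul (α : F) (n u : ℕ) (f : MvPolynomial ℕ F) :
    cutJoin α n (X u * f) = X u * cutJoin α n f + (α * u) • (X (n + u - 1) * f) := by
  rw [cutJoin_apply, cutJoin_apply, Derivation.leibniz, joinDerivation_X]
  simp only [smul_eq_mul, smul_eq_C_mul]
  ring

lemma joinDerivation_lie (α : F) {i r : ℕ} (hi : 1 ≤ i) (hr : 1 ≤ r) :
    ⁅joinDerivation α r, joinDerivation α i⁆ = (α * (i - r)) • joinDerivation α (i + r - 1) := by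
  refine derivation_ext fun u => ?_
  rw [Derivation.commutator_apply, Derivation.smul_apply, joinDerivation_X, joinDerivation_X,
    Derivation.map_smul, Derivation.map_smul, joinDerivation_X, joinDerivation_X, joinDerivation_X,
    smul_smul, smul_smul, smul_smul, show r + (i + u - 1) - 1 = i + r - 1 + u - 1 by omega,
    show i + (r + u - 1) - 1 = i + r - 1 + u - 1 by omega, ← sub_smul]
  congr 1
  rcases Nat.eq_zero_or_pos u with rfl | hu
  · simp
  · push_cast [Nat.cast_sub (show 1 ≤ i + u by omega), Nat.cast_sub (show 1 ≤ r + u by omega)]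
    ring

-- The truncated subtractions `f + 1 - c` and `a - (f + 1)` vanish exactly outside the ranges of
-- the two Leibniz sums, so both can be written over the common range `1 ≤ f ≤ a + c - 3`.
lemma joinDerivation_sum_X_mul_X (α : F) {a c : ℕ} (hc : 1 ≤ c) :
    joinDerivation α c (∑ d ∈ Icc 1 (a - 2), X (a - 1 - d) * X d)
      = α • ∑ f ∈ Icc 1 (a + c - 3),
          (((f + 1 - c : ℕ) : F) + ((a - (f + 1) : ℕ) : F)) • (X (a + c - 2 - f) * X f) := by
  have first :
      ∑ d ∈ Icc 1 (a - 2), (X (a - 1 - d) : MvPolynomial ℕ F) • joinDerivation α c (X d)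
        = ∑ f ∈ Icc 1 (a + c - 3), (α * ((f + 1 - c : ℕ) : F)) • (X (a + c - 2 - f) * X f) := by
    rw [← sum_subset (Icc_subset_Icc_left hc : Icc c (a + c - 3) ⊆ _) fun f hf hf' => ?_]
    · refine sum_nbij' (fun d => d + c - 1) (fun f => f + 1 - c) ?_ ?_ ?_ ?_ fun d hd => ?_ <;>
        simp only [mem_Icc] at * <;> try omega
      rw [joinDerivation_X, show d + c - 1 + 1 - c = d by omega,
        show a + c - 2 - (d + c - 1) = a - 1 - d by omega, add_comm d c, smul_eq_mul,
        mul_smul_comm, mul_comm]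
    · simp only [mem_Icc] at hf hf'
      simp [show f + 1 - c = 0 by omega]
  have second :
      ∑ d ∈ Icc 1 (a - 2), (X d : MvPolynomial ℕ F) • joinDerivation α c (X (a - 1 - d))
        = ∑ f ∈ Icc 1 (a + c - 3), (α * ((a - (f + 1) : ℕ) : F)) • (X (a + c - 2 - f) * X f) := by
    rw [← sum_subset (Icc_subset_Icc_right (by omega) : Icc 1 (a - 2) ⊆ Icc 1 (a + c - 3))
      fun f hf hf' => ?_]
    · refine sum_congr rfl fun d hd => ?_
      simp only [mem_Icc] at hd
      rw [joinDerivation_X, show c + (a - 1 - d) - 1 = a + c - 2 - d by omega,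
        show a - 1 - d = a - (d + 1) by omega, smul_eq_mul, mul_smul_comm, mul_comm,
        mul_comm (X d)]
    · simp only [mem_Icc] at hf hf'
      simp [show a - (f + 1) = 0 by omega]
  rw [map_sum]
  simp only [Derivation.leibniz]
  rw [sum_add_distrib, first, second, ← sum_add_distrib, smul_sum]
  refine sum_congr rfl fun f _ => ?_
  module

lemma joinDerivation_cutPoly_sub (α : F) {i r : ℕ} (hi : 1 ≤ i) (hr : 1 ≤ r) :
    joinDerivation α r (cutPoly α i) - joinDerivation α i (cutPoly α r)
      = (α * (i - r)) • cutPoly α (i + r - 1) := by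
  have hcut : cutPoly α (i + r - 1) = ((α - 1) * ((i + r - 2 : ℕ) : F)) • X (i + r - 2)
      + ∑ f ∈ Icc 1 (i + r - 3), X (i + r - 2 - f) * X f := by
    simp only [cutPoly, show i + r - 1 - 1 = i + r - 2 by omega,
      show i + r - 1 - 2 = i + r - 3 by omega]
  have hlin : ∀ a c : ℕ, 1 ≤ a →
      joinDerivation α c (X (a - 1)) = (α * ((a - 1 : ℕ) : F)) • X (a + c - 2) := by
    intro a c ha
    rw [joinDerivation_X, show c + (a - 1) - 1 = a + c - 2 by omega]
  have hquad : α • ∑ f ∈ Icc 1 (i + r - 3),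
        (((f + 1 - r : ℕ) : F) + ((i - (f + 1) : ℕ) : F)) • (X (i + r - 2 - f) * X f)
      - α • ∑ f ∈ Icc 1 (i + r - 3),
        (((f + 1 - i : ℕ) : F) + ((r - (f + 1) : ℕ) : F)) • (X (i + r - 2 - f) * X f)
      = (α * (i - r)) •
          ∑ f ∈ Icc 1 (i + r - 3), (X (i + r - 2 - f) * X f : MvPolynomial ℕ F) := by
    rw [← smul_sub, ← sum_sub_distrib, smul_sum, smul_sum]
    refine sum_congr rfl fun f _ => ?_
    rw [← sub_smul, smul_smul]
    congr 1
    linear_combination α * (natCast_tsub_sub_natCast_tsub (R := F) (f + 1) r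
      - natCast_tsub_sub_natCast_tsub (R := F) (f + 1) i)
  rw [cutPoly, cutPoly, hcut, map_add, map_add, Derivation.map_smul, Derivation.map_smul,
    hlin i r hi, hlin r i hr, joinDerivation_sum_X_mul_X α hr,
    joinDerivation_sum_X_mul_X α hi, add_comm r i]
  rw [Nat.cast_sub hi, Nat.cast_sub hr, Nat.cast_sub (show 2 ≤ i + r by omega)]
  push_cast
  linear_combination (norm := module) hquad

lemma cutJoin_commutator (α : F) {i r : ℕ} (hi : 1 ≤ i) (hr : 1 ≤ r) (f : MvPolynomial ℕ F) :
    cutJoin α r (cutJoin α i f)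
      = cutJoin α i (cutJoin α r f) + (α * (i - r)) • cutJoin α (i + r - 1) f := by
  have hD := congr($(joinDerivation_lie α hi hr) f)
  rw [Derivation.commutator_apply, Derivation.smul_apply] at hD
  have hcut := joinDerivation_cutPoly_sub α hi hr
  simp only [cutJoin_apply, map_add, Derivation.leibniz, smul_eq_mul, smul_eq_C_mul] at *
  linear_combination f * hcut + hD

lemma joinDerivation_symbolEquiv_single (α : F) (n : ℕ) {ν : Multiset ℕ} {s : Finset ℕ}
    (hs : ν.toFinset ⊆ s) :
    joinDerivation α n (symbolEquiv (Finsupp.single ν 1))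
      = α • ∑ j ∈ s, ((j : F) * (ν.count j : F)) •
          (X (n + j - 1) * symbolEquiv (Finsupp.single (ν.erase j) 1)) := by
  rw [symbolEquiv_single, joinDerivation, mkDerivation_monomial, one_smul,
    Finsupp.sum_of_support_subset _ hs _ fun j _ => by simp, smul_sum]
  refine sum_congr rfl fun j _ => ?_
  rw [symbolEquiv_single, Multiset.toFinsupp_erase, Multiset.toFinsupp_apply, smul_eq_mul,
    ← mul_one (ν.count j : F), ← C_mul_monomial]
  simp only [smul_eq_C_mul, C_mul, C_1]
  ring

lemma symbolEquiv_vTheta (α : F) (n : ℕ) (μ : Multiset ℕ) :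
    symbolEquiv (vTheta α n μ) = cutJoin α n (symbolEquiv (Finsupp.single (μ.erase n) 1)) := by
  rw [cutJoin_apply, joinDerivation_symbolEquiv_single α n
    (Multiset.toFinset_subset.2 (Multiset.erase_subset n μ)), vTheta, cutPoly]
  simp only [map_add, map_smul, map_sum, symbolEquiv_single_cons, add_mul, sum_mul,
    smul_mul_assoc, mul_assoc, Multiset.count_erase]

lemma ThetaOp_single (α : F) (n : ℕ) (μ : Multiset ℕ) (c : F) :
    ThetaOp α n (Finsupp.single μ c) = c • vTheta α n μ := by
  simp [ThetaOp]

lemma PhiOp_single (i r : ℕ) (μ : Multiset ℕ) (c : F) :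
    PhiOp i r (Finsupp.single μ c)
      = c • Finsupp.single ((i + r - 1) ::ₘ (μ.erase i).erase r) 1 := by
  simp [PhiOp]

lemma ThetaOp_symbolEquiv_symm_X_mul (α : F) (n : ℕ) (f : MvPolynomial ℕ F) :
    ThetaOp α n (symbolEquiv.symm (X n * f)) = symbolEquiv.symm (cutJoin α n f) := by
  obtain ⟨g, rfl⟩ := symbolEquiv.surjective f
  induction g using Finsupp.induction_linear with
  | zero => simp
  | add g h hg hh => simp only [map_add, mul_add, hg, hh]
  | single μ c =>
    rw [← symbolEquiv_single_cons, LinearEquiv.symm_apply_apply, ThetaOp_single,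
      LinearEquiv.eq_symm_apply, map_smul, symbolEquiv_vTheta, Multiset.erase_cons_head,
      ← Finsupp.smul_single_one μ c, map_smul, map_smul]

/-- Proposition 5.1 of the paper: on symbols `a^λ` with `λ` a partition containing a part `i`
and a part `r`,
`Θ_r(Θ_i − α r Φ_{i,r}) = Θ_i(Θ_r − α i Φ_{i,r}) + α(i−r) Θ_{i+r−1} Φ_{i,r}`. -/
theorem stmt17 (α : F) (i r : ℕ) (lam : Multiset ℕ)
    (hpos : ∀ x ∈ lam, 0 < x) (hil : i ∈ lam) (hrl : r ∈ lam) :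
    ThetaOp α r ((ThetaOp α i - (α * (r : F)) • PhiOp i r : (Multiset ℕ →₀ F) →ₗ[F] (Multiset ℕ →₀ F)) (Finsupp.single lam (1 : F)))
      = ThetaOp α i ((ThetaOp α r - (α * (i : F)) • PhiOp i r : (Multiset ℕ →₀ F) →ₗ[F] (Multiset ℕ →₀ F)) (Finsupp.single lam (1 : F)))
        + (α * ((i : F) - (r : F))) •
            ThetaOp α (i + r - 1) (PhiOp i r (Finsupp.single lam (1 : F))) := by
  rcases eq_or_ne i r with rfl | hir
  · rw [sub_self, mul_zero, zero_smul, add_zero]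
  have hi : 1 ≤ i := hpos i hil
  have hr : 1 ≤ r := hpos r hrl
  obtain ⟨κ, rfl⟩ : ∃ κ, lam = i ::ₘ r ::ₘ κ := ⟨(lam.erase i).erase r, by
    rw [Multiset.cons_erase ((Multiset.mem_erase_of_ne hir.symm).2 hrl), Multiset.cons_erase hil]⟩
  set a := Finsupp.single (i ::ₘ r ::ₘ κ) (1 : F) with ha_def
  set k := symbolEquiv (Finsupp.single κ (1 : F))
  have ha : a = symbolEquiv.symm (X i * (X r * k)) := by
    rw [LinearEquiv.eq_symm_apply, ha_def, symbolEquiv_single_cons, symbolEquiv_single_cons]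
  have hΦ : PhiOp i r a = symbolEquiv.symm (X (i + r - 1) * k) := by
    rw [ha_def, PhiOp_single, one_smul, Multiset.erase_cons_head, Multiset.erase_cons_head,
      LinearEquiv.eq_symm_apply, symbolEquiv_single_cons]
  have hΘi : ThetaOp α i a = symbolEquiv.symm (X r * cutJoin α i k) + (α * r) • PhiOp i r a := by
    rw [hΦ, ha, ThetaOp_symbolEquiv_symm_X_mul, cutJoin_X_mul, map_add, map_smul]
  have hΘr : ThetaOp α r a = symbolEquiv.symm (X i * cutJoin α r k) + (α * i) • PhiOp i r a := by
    rw [hΦ, ha, mul_left_comm, ThetaOp_symbolEquiv_symm_X_mul, cutJoin_X_mul, map_add, map_smul,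
      add_comm r i]
  rw [LinearMap.sub_apply, LinearMap.sub_apply, LinearMap.smul_apply, LinearMap.smul_apply, hΘi,
    hΘr, add_sub_cancel_right, add_sub_cancel_right, hΦ, ThetaOp_symbolEquiv_symm_X_mul,
    ThetaOp_symbolEquiv_symm_X_mul, ThetaOp_symbolEquiv_symm_X_mul, cutJoin_commutator α hi hr, map_add,
    map_smul]
end
end
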